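/- arXiv:2209.11164 — 4 statements merged into one kernel-verified Lean document; each statement's English description precedes it below -/
import Mathlib

section
/- Let P be column stochastic and irreducible with invariant distribution μ, and let P̂ = P − μ𝟙ᵀ. Then the operator norm of P̂ with respect to the ℓ²(1/μ) norm equals √λ₂, where λ₂ is the second largest eigenvalue of P*P with P* = diag(μ)Pᵀdiag(1/μ). -/
/-!
In `ℓ²(1/μ)` one has `⟪x, μ⟫ = ∑ x`, hence `‖P̂x‖² = ‖Px‖² - (∑ x)² = ∑ λᵢ cᵢ² - (∑ cᵢ dᵢ)²`,
where `cᵢ` and `dᵢ` are the coordinates of `x` and `μ` in the orthonormal eigenbasis of `P*P`.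
Since `P` is a contraction, every `λᵢ ≤ 1`; since `P*P μ = μ`, `dᵢ ≠ 0` only where `λᵢ = 1`.
So either `λ₁ ≤ λ₂` (Lean indices `0` and `1`) and the bound `λ₂ ‖x‖²` is immediate, or `μ`
spans the top eigenline, the subtracted square is exactly `c₁²`, and the remaining coordinates
only see eigenvalues `≤ λ₂`. The bound is attained on a vector of `span (v₁, v₂)` orthogonal
to `μ`.
-/

open Matrix BigOperators

/-- A matrix is column stochastic: nonnegative entries, each column sums to one. -/
def ColStoch {m : Type*} [Fintype m] (M : Matrix m m ℝ) : Prop :=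
  (∀ i j, 0 ≤ M i j) ∧ ∀ j, ∑ i, M i j = 1

/-- Irreducibility of a matrix via its pattern of nonzero entries:
the associated directed graph is strongly connected. -/
def Irred {m : Type*} [Fintype m] [DecidableEq m] (M : Matrix m m ℝ) : Prop :=
  ∀ i j, ∃ k : ℕ, 0 < k ∧ (M ^ k) i j ≠ 0

/-- Weighted inner product `⟨x,y⟩_w = ∑ i, x i * y i * w i`. -/
def innerW {m : Type*} [Fintype m] (w x y : m → ℝ) : ℝ := ∑ i, x i * y i * w i

/-- Weighted `ℓ²(w)` norm. -/
noncomputable def normW {m : Type*} [Fintype m] (w x : m → ℝ) : ℝ :=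
  Real.sqrt (innerW w x x)

/-- Operator norm of a matrix with respect to the `ℓ²(w)` norm. -/
noncomputable def opNormW {m : Type*} [Fintype m] (w : m → ℝ) (M : Matrix m m ℝ) : ℝ :=
  sInf {c | 0 ≤ c ∧ ∀ x, normW w (M.mulVec x) ≤ c * normW w x}

/-- Aggregation operator for the partition `{f⁻¹(i)}` of `Fin N`. -/
def Agg {N n : ℕ} (f : Fin N → Fin n) : Matrix (Fin n) (Fin N) ℝ :=
  fun i x => if f x = i then 1 else 0

/-- Disaggregation operator for the partition `{f⁻¹(i)}` and weight vector ν. -/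
noncomputable def Disagg {N n : ℕ} (f : Fin N → Fin n) (ν : Fin N → ℝ) :
    Matrix (Fin N) (Fin n) ℝ :=
  fun j i => if f j = i then ν j / (Agg f).mulVec ν i else 0

/-- Coarse approximation `C(ν) = A P D(ν)`. -/
noncomputable def CoarseC {N n : ℕ} (P : Matrix (Fin N) (Fin N) ℝ) (f : Fin N → Fin n)
    (ν : Fin N → ℝ) : Matrix (Fin n) (Fin n) ℝ := Agg f * P * Disagg f ν

/-- `P̂ = P - μ 𝟙ᵀ`. -/
def hatP {N : ℕ} (P : Matrix (Fin N) (Fin N) ℝ) (μ : Fin N → ℝ) :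
    Matrix (Fin N) (Fin N) ℝ := P - vecMulVec μ 1

/-- Coarse projection `S(ν) = D(ν)[A(I-P+μ𝟙ᵀ)D(ν)]⁻¹ A(I-P+μ𝟙ᵀ)`. -/
noncomputable def CoarseS {N n : ℕ} (P : Matrix (Fin N) (Fin N) ℝ) (f : Fin N → Fin n)
    (μ ν : Fin N → ℝ) : Matrix (Fin N) (Fin N) ℝ :=
  Disagg f ν * (Agg f * (1 - P + vecMulVec μ 1) * Disagg f ν)⁻¹ *
    (Agg f * (1 - P + vecMulVec μ 1))

/-- Orthogonal coarse projection `Π(ν) = D(ν) A`. -/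
noncomputable def PiProj {N n : ℕ} (f : Fin N → Fin n) (ν : Fin N → ℝ) :
    Matrix (Fin N) (Fin N) ℝ := Disagg f ν * Agg f

/-- Error propagation operator `J(ν) = P̂ (I - S(ν))`. -/
noncomputable def Jop {N n : ℕ} (P : Matrix (Fin N) (Fin N) ℝ) (f : Fin N → Fin n)
    (μ ν : Fin N → ℝ) : Matrix (Fin N) (Fin N) ℝ := hatP P μ * (1 - CoarseS P f μ ν)

/-- Spectrum (set of complex eigenvalues) of a real matrix. -/
noncomputable def specC {N : ℕ} (M : Matrix (Fin N) (Fin N) ℝ) : Set ℂ :=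
  spectrum ℂ (M.map (Complex.ofReal))

/-- Spectral radius of a real matrix. -/
noncomputable def specRad {N : ℕ} (M : Matrix (Fin N) (Fin N) ℝ) : ℝ :=
  sSup ((fun z : ℂ => ‖z‖) '' specC M)

/-- The `ℓ²(1/μ)`-adjoint `diag(μ) Mᵀ diag(1/μ)`. -/
noncomputable def adjW {N : ℕ} (μ : Fin N → ℝ) (M : Matrix (Fin N) (Fin N) ℝ) :
    Matrix (Fin N) (Fin N) ℝ :=
  Matrix.diagonal μ * Mᵀ * Matrix.diagonal (fun i => (μ i)⁻¹)

/-- The ε-inner product `⟨x,y⟩_ε = ⟨x,(I-Π(μ))y⟩_{1/μ} + ε ⟨x,Π(μ)y⟩_{1/μ}`. -/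
noncomputable def innerEps {N n : ℕ} (f : Fin N → Fin n) (μ : Fin N → ℝ) (ε : ℝ)
    (x y : Fin N → ℝ) : ℝ :=
  innerW (fun i => (μ i)⁻¹) x ((1 - PiProj f μ).mulVec y) +
    ε * innerW (fun i => (μ i)⁻¹) x ((PiProj f μ).mulVec y)

/-- The ε-norm. -/
noncomputable def normEps {N n : ℕ} (f : Fin N → Fin n) (μ : Fin N → ℝ) (ε : ℝ)
    (x : Fin N → ℝ) : ℝ := Real.sqrt (innerEps f μ ε x x)

/-- Operator norm induced by the ε-norm. -/
noncomputable def opNormEps {N n : ℕ} (f : Fin N → Fin n) (μ : Fin N → ℝ) (ε : ℝ)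
    (M : Matrix (Fin N) (Fin N) ℝ) : ℝ :=
  sInf {c | 0 ≤ c ∧ ∀ x, normEps f μ ε (M.mulVec x) ≤ c * normEps f μ ε x}

section WeightedInner

variable {m : Type*} [Fintype m] {w : m → ℝ}

lemma innerW_comm (w x y : m → ℝ) : innerW w x y = innerW w y x := by
  simp only [innerW, mul_comm (x _)]

lemma innerW_add_left (w x x' y : m → ℝ) :
    innerW w (x + x') y = innerW w x y + innerW w x' y := by
  simp only [innerW, Pi.add_apply, add_mul, Finset.sum_add_distrib]

lemma innerW_sub_left (w x x' y : m → ℝ) :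
    innerW w (x - x') y = innerW w x y - innerW w x' y := by
  simp only [innerW, Pi.sub_apply, sub_mul, Finset.sum_sub_distrib]

lemma innerW_smul_left (w x y : m → ℝ) (a : ℝ) : innerW w (a • x) y = a * innerW w x y := by
  simp only [innerW, Pi.smul_apply, smul_eq_mul, Finset.mul_sum, mul_assoc]

lemma innerW_add_right (w x y y' : m → ℝ) :
    innerW w x (y + y') = innerW w x y + innerW w x y' := by
  rw [innerW_comm, innerW_add_left, innerW_comm, innerW_comm w y']

lemma innerW_sub_right (w x y y' : m → ℝ) :
    innerW w x (y - y') = innerW w x y - innerW w x y' := by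
  rw [innerW_comm, innerW_sub_left, innerW_comm, innerW_comm w y']

lemma innerW_smul_right (w x y : m → ℝ) (a : ℝ) : innerW w x (a • y) = a * innerW w x y := by
  rw [innerW_comm, innerW_smul_left, innerW_comm]

lemma innerW_self_nonneg (hw : ∀ i, 0 ≤ w i) (x : m → ℝ) : 0 ≤ innerW w x x :=
  Finset.sum_nonneg fun i _ => mul_nonneg (mul_self_nonneg _) (hw i)

lemma innerW_eq_inner (hw : ∀ i, 0 ≤ w i) (x y : m → ℝ) :
    innerW w x y = inner ℝ (WithLp.toLp 2 fun i => √(w i) * x i : EuclideanSpace ℝ m)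
      (WithLp.toLp 2 fun i => √(w i) * y i) := by
  simp only [innerW, PiLp.inner_apply, RCLike.inner_apply, conj_trivial]
  refine Finset.sum_congr rfl fun i _ => ?_
  linear_combination (x i * y i) * (Real.mul_self_sqrt (hw i)).symm

lemma sum_innerW_mul_innerW [DecidableEq m] (hw : ∀ i, 0 ≤ w i) {v : m → m → ℝ}
    (hv : ∀ i j, innerW w (v i) (v j) = if i = j then 1 else 0) (x y : m → ℝ) :
    ∑ i, innerW w x (v i) * innerW w y (v i) = innerW w x y := by
  let E : (m → ℝ) → EuclideanSpace ℝ m := fun x => WithLp.toLp 2 fun i => √(w i) * x i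
  have hE : ∀ x y, innerW w x y = inner ℝ (E x) (E y) := innerW_eq_inner hw
  have hon : Orthonormal ℝ (E ∘ v) := orthonormal_iff_ite.2 fun i j => by
    rw [Function.comp_apply, Function.comp_apply, ← hE, hv]
  let b := OrthonormalBasis.mk hon
    (hon.linearIndependent.span_eq_top_of_card_eq_finrank' finrank_euclideanSpace.symm).ge
  simp only [hE, ← b.sum_inner_mul_inner (E x) (E y), b, OrthonormalBasis.coe_mk,
    Function.comp_apply, real_inner_comm (E y)]

lemma innerW_mulVec_eq_sum_of_orthonormal_eigenbasis [DecidableEq m] (hw : ∀ i, 0 ≤ w i)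
    {v : m → m → ℝ} (hv : ∀ i j, innerW w (v i) (v j) = if i = j then 1 else 0) {M : Matrix m m ℝ}
    (hM : ∀ x y, innerW w (M *ᵥ x) y = innerW w x (M *ᵥ y)) {lam : m → ℝ}
    (heig : ∀ i, M *ᵥ v i = lam i • v i) (x : m → ℝ) :
    innerW w x (M *ᵥ x) = ∑ i, lam i * innerW w x (v i) ^ 2 := by
  rw [← sum_innerW_mul_innerW hw hv]
  refine Finset.sum_congr rfl fun i _ => ?_
  rw [hM, heig, innerW_smul_right]
  ring

lemma opNormW_eq_sqrt {M : Matrix m m ℝ} {t : ℝ} (ht : 0 ≤ t)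
    (hle : ∀ x, innerW w (M *ᵥ x) (M *ᵥ x) ≤ t * innerW w x x) {x₀ : m → ℝ}
    (hx₀ : 0 < innerW w x₀ x₀) (hge : t * innerW w x₀ x₀ ≤ innerW w (M *ᵥ x₀) (M *ᵥ x₀)) :
    opNormW w M = √t := by
  have hbound : ∀ x, normW w (M *ᵥ x) ≤ √t * normW w x := fun x => by
    rw [normW, normW, ← Real.sqrt_mul ht]
    exact Real.sqrt_le_sqrt (hle x)
  refine le_antisymm (csInf_le ⟨0, fun c hc => hc.1⟩ ⟨Real.sqrt_nonneg t, hbound⟩)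
    (le_csInf ⟨√t, Real.sqrt_nonneg t, hbound⟩ ?_)
  rintro c ⟨-, hc⟩
  have h := (Real.sqrt_le_sqrt hge).trans (hc x₀)
  rw [Real.sqrt_mul ht] at h
  exact le_of_mul_le_mul_right h (Real.sqrt_pos.2 hx₀)

end WeightedInner

section Adjoint

variable {N : ℕ} {μ : Fin N → ℝ}

lemma innerW_mulVec_left (hμ : ∀ i, μ i ≠ 0) (M : Matrix (Fin N) (Fin N) ℝ) (x y : Fin N → ℝ) :
    innerW (fun i => (μ i)⁻¹) (M *ᵥ x) y = innerW (fun i => (μ i)⁻¹) x (adjW μ M *ᵥ y) := by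
  simp only [innerW, adjW, mulVec, dotProduct, mul_apply, diagonal_apply, transpose_apply,
    ite_mul, zero_mul, mul_ite, mul_zero, Finset.sum_ite_eq, Finset.sum_ite_eq',
    Finset.mem_univ, if_true, Finset.sum_mul, Finset.mul_sum]
  rw [Finset.sum_comm]
  refine Finset.sum_congr rfl fun j _ => Finset.sum_congr rfl fun i _ => ?_
  field_simp [hμ i, hμ j]

lemma innerW_adjW_mul_self_mulVec (hμ : ∀ i, μ i ≠ 0) (M : Matrix (Fin N) (Fin N) ℝ)
    (x y : Fin N → ℝ) :
    innerW (fun i => (μ i)⁻¹) x ((adjW μ M * M) *ᵥ y) =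
      innerW (fun i => (μ i)⁻¹) (M *ᵥ x) (M *ᵥ y) := by
  rw [← mulVec_mulVec, innerW_mulVec_left hμ]

lemma adjW_mulVec_self {P : Matrix (Fin N) (Fin N) ℝ} (hP : ∀ j, ∑ i, P i j = 1)
    (hμ : ∀ i, μ i ≠ 0) : adjW μ P *ᵥ μ = μ := by
  funext j
  simp only [adjW, mulVec, dotProduct, mul_apply, diagonal_apply, transpose_apply,
    ite_mul, zero_mul, mul_ite, mul_zero, Finset.sum_ite_eq, Finset.sum_ite_eq',
    Finset.mem_univ, if_true, inv_mul_cancel_right₀ (hμ _), ← Finset.mul_sum, hP, mul_one]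

end Adjoint

section Stochastic

variable {m : Type*} [Fintype m] {P : Matrix m m ℝ} {μ : m → ℝ}

lemma innerW_inv_right_self (hμ : ∀ i, μ i ≠ 0) (x : m → ℝ) :
    innerW (fun i => (μ i)⁻¹) x μ = ∑ i, x i := by
  simp only [innerW, mul_inv_cancel_right₀ (hμ _)]

lemma sum_mulVec_of_sum_col_eq_one (hP : ∀ j, ∑ i, P i j = 1) (x : m → ℝ) :
    ∑ i, (P *ᵥ x) i = ∑ i, x i := by
  simp only [mulVec, dotProduct]
  rw [Finset.sum_comm]
  simp only [← Finset.sum_mul, hP, one_mul]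

lemma innerW_mulVec_self_le (hP : ColStoch P) (hμ : ∀ i, 0 < μ i) (hinv : P *ᵥ μ = μ)
    (x : m → ℝ) :
    innerW (fun i => (μ i)⁻¹) (P *ᵥ x) (P *ᵥ x) ≤ innerW (fun i => (μ i)⁻¹) x x := by
  have hrow : ∀ i, (P *ᵥ x) i ^ 2 ≤ μ i * ∑ j, P i j * (x j ^ 2 / μ j) := fun i => by
    conv_rhs => rw [← congrFun hinv i]
    refine Finset.sum_sq_le_sum_mul_sum_of_sq_le_mul _
      (fun j _ => mul_nonneg (hP.1 i j) (hμ j).le)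
      (fun j _ => mul_nonneg (hP.1 i j) (div_nonneg (sq_nonneg _) (hμ j).le)) fun j _ => ?_
    refine le_of_eq ?_
    field_simp [(hμ j).ne']
  calc ∑ i, (P *ᵥ x) i * (P *ᵥ x) i * (μ i)⁻¹
      ≤ ∑ i, ∑ j, P i j * (x j ^ 2 / μ j) := Finset.sum_le_sum fun i _ => by
        rw [← sq, ← div_eq_mul_inv, div_le_iff₀ (hμ i), mul_comm]
        exact hrow i
    _ = ∑ j, x j * x j * (μ j)⁻¹ := by
        rw [Finset.sum_comm]
        simp only [← Finset.sum_mul, hP.2, one_mul, sq, div_eq_mul_inv]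

lemma hatP_mulVec {N : ℕ} (P : Matrix (Fin N) (Fin N) ℝ) (μ x : Fin N → ℝ) :
    hatP P μ *ᵥ x = P *ᵥ x - (∑ i, x i) • μ := by
  rw [hatP, sub_mulVec, vecMulVec_mulVec, one_dotProduct, op_smul_eq_smul]

lemma innerW_hatP_mulVec_self {N : ℕ} {P : Matrix (Fin N) (Fin N) ℝ} {μ : Fin N → ℝ}
    (hP : ∀ j, ∑ i, P i j = 1) (hμ : ∀ i, μ i ≠ 0) (hμsum : ∑ i, μ i = 1) (x : Fin N → ℝ) :
    innerW (fun i => (μ i)⁻¹) (hatP P μ *ᵥ x) (hatP P μ *ᵥ x) =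
      innerW (fun i => (μ i)⁻¹) (P *ᵥ x) (P *ᵥ x) - (∑ i, x i) ^ 2 := by
  simp only [hatP_mulVec, innerW_sub_left, innerW_sub_right, innerW_smul_left,
    innerW_smul_right, innerW_comm _ μ]
  simp only [innerW_inv_right_self hμ, sum_mulVec_of_sum_col_eq_one hP, hμsum]
  ring

end Stochastic

lemma sum_mul_sq_sub_sq_le {ι : Type*} [Fintype ι] [DecidableEq ι] {lam c d : ι → ℝ} {i₀ : ι}
    {t : ℝ} (ht : 0 ≤ t) (hlam : ∀ i ≠ i₀, lam i ≤ t) (hlam₀ : lam i₀ ≤ 1)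
    (hd : ∀ i, lam i * d i = d i) (hd_sq : ∑ i, d i ^ 2 = 1) :
    ∑ i, lam i * c i ^ 2 - (∑ i, c i * d i) ^ 2 ≤ t * ∑ i, c i ^ 2 := by
  rcases le_or_gt (lam i₀) t with h | h
  · have : ∑ i, lam i * c i ^ 2 ≤ t * ∑ i, c i ^ 2 := by
      rw [Finset.mul_sum]
      refine Finset.sum_le_sum fun i _ => mul_le_mul_of_nonneg_right ?_ (sq_nonneg _)
      by_cases hi : i = i₀
      · exact hi ▸ h
      · exact hlam i hi
    nlinarith [sq_nonneg (∑ i, c i * d i)]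
  · have hd_eq : ∀ i ≠ i₀, d i = 0 := fun i hi => by
      have : (lam i - 1) * d i = 0 := by linarith [hd i]
      exact (mul_eq_zero.1 this).resolve_left (by linarith [hlam i hi])
    have hsum : ∀ f : ι → ℝ, ∑ i, f i * d i = f i₀ * d i₀ := fun f =>
      Finset.sum_eq_single i₀ (fun i _ hi => by rw [hd_eq i hi, mul_zero]) (by simp)
    have hd₀ : d i₀ ^ 2 = 1 := by simpa only [sq, hsum] using hd_sq
    have hrest : ∑ i ∈ Finset.univ.erase i₀, lam i * c i ^ 2 ≤
        t * ∑ i ∈ Finset.univ.erase i₀, c i ^ 2 := by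
      rw [Finset.mul_sum]
      exact Finset.sum_le_sum fun i hi =>
        mul_le_mul_of_nonneg_right (hlam i (Finset.ne_of_mem_erase hi)) (sq_nonneg _)
    rw [hsum, ← Finset.add_sum_erase _ _ (Finset.mem_univ i₀),
      ← Finset.add_sum_erase _ (fun i => c i ^ 2) (Finset.mem_univ i₀), mul_pow, hd₀]
    nlinarith [sq_nonneg (c i₀)]

section Spectral

variable {N : ℕ} {P : Matrix (Fin N) (Fin N) ℝ} {μ lam : Fin N → ℝ} {v : Fin N → Fin N → ℝ}

lemma innerW_mulVec_self_eq_sum_eigenvalues (hμ : ∀ i, 0 < μ i)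
    (horth : ∀ i j, innerW (fun i => (μ i)⁻¹) (v i) (v j) = if i = j then 1 else 0)
    (heig : ∀ i, (adjW μ P * P) *ᵥ v i = lam i • v i) (x : Fin N → ℝ) :
    innerW (fun i => (μ i)⁻¹) (P *ᵥ x) (P *ᵥ x) =
      ∑ i, lam i * innerW (fun i => (μ i)⁻¹) x (v i) ^ 2 := by
  have hQ := innerW_adjW_mul_self_mulVec (fun i => (hμ i).ne') P
  rw [← hQ, innerW_mulVec_eq_sum_of_orthonormal_eigenbasis (fun i => inv_nonneg.2 (hμ i).le) horth
    (fun x y => by rw [innerW_comm, hQ, hQ, innerW_comm]) heig]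

lemma innerW_mulVec_eigenvector (hμ : ∀ i, μ i ≠ 0)
    (horth : ∀ i j, innerW (fun i => (μ i)⁻¹) (v i) (v j) = if i = j then 1 else 0)
    (heig : ∀ i, (adjW μ P * P) *ᵥ v i = lam i • v i) (i : Fin N) :
    innerW (fun i => (μ i)⁻¹) (P *ᵥ v i) (P *ᵥ v i) = lam i := by
  rw [← innerW_adjW_mul_self_mulVec hμ, heig, innerW_smul_right, horth, if_pos rfl, mul_one]

lemma eigenvalue_mul_innerW_invariant (hP : ∀ j, ∑ i, P i j = 1) (hμ : ∀ i, μ i ≠ 0)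
    (hinv : P *ᵥ μ = μ) (heig : ∀ i, (adjW μ P * P) *ᵥ v i = lam i • v i) (i : Fin N) :
    lam i * innerW (fun i => (μ i)⁻¹) μ (v i) = innerW (fun i => (μ i)⁻¹) μ (v i) := by
  rw [← innerW_smul_right, ← heig, innerW_adjW_mul_self_mulVec hμ, hinv, innerW_comm,
    innerW_mulVec_left hμ, adjW_mulVec_self hP hμ, innerW_comm]

lemma innerW_hatP_mulVec_self_le (hP : ColStoch P) (hμpos : ∀ i, 0 < μ i)
    (hμsum : ∑ i, μ i = 1) (hinv : P *ᵥ μ = μ)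
    (horth : ∀ i j, innerW (fun i => (μ i)⁻¹) (v i) (v j) = if i = j then 1 else 0)
    (heig : ∀ i, (adjW μ P * P) *ᵥ v i = lam i • v i) {i₀ : Fin N} {t : ℝ} (ht : 0 ≤ t)
    (hlam : ∀ i ≠ i₀, lam i ≤ t) (x : Fin N → ℝ) :
    innerW (fun i => (μ i)⁻¹) (hatP P μ *ᵥ x) (hatP P μ *ᵥ x) ≤
      t * innerW (fun i => (μ i)⁻¹) x x := by
  have hw : ∀ i, 0 ≤ (μ i)⁻¹ := fun i => inv_nonneg.2 (hμpos i).le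
  have hμ : ∀ i, μ i ≠ 0 := fun i => (hμpos i).ne'
  have hlam₀ : lam i₀ ≤ 1 := by
    have h := innerW_mulVec_self_le hP hμpos hinv (v i₀)
    rwa [innerW_mulVec_eigenvector hμ horth heig, horth, if_pos rfl] at h
  have hd_sq : ∑ i, innerW (fun i => (μ i)⁻¹) μ (v i) ^ 2 = 1 := by
    simpa only [sq, sum_innerW_mul_innerW hw horth, innerW_inv_right_self hμ] using hμsum
  rw [innerW_hatP_mulVec_self hP.2 hμ hμsum, innerW_mulVec_self_eq_sum_eigenvalues hμpos horth heig,
    ← innerW_inv_right_self hμ x, ← sum_innerW_mul_innerW hw horth x x,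
    ← sum_innerW_mul_innerW hw horth x μ]
  simp only [← sq]
  exact sum_mul_sq_sub_sq_le ht hlam hlam₀
    (eigenvalue_mul_innerW_invariant hP.2 hμ hinv heig) hd_sq

lemma exists_le_innerW_hatP_mulVec_self (hP : ∀ j, ∑ i, P i j = 1) (hμ : ∀ i, μ i ≠ 0)
    (hμsum : ∑ i, μ i = 1)
    (horth : ∀ i j, innerW (fun i => (μ i)⁻¹) (v i) (v j) = if i = j then 1 else 0)
    (heig : ∀ i, (adjW μ P * P) *ᵥ v i = lam i • v i) {i₀ i₁ : Fin N} (hi : i₀ ≠ i₁)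
    (hlam : lam i₁ ≤ lam i₀) :
    ∃ x, 0 < innerW (fun i => (μ i)⁻¹) x x ∧
      lam i₁ * innerW (fun i => (μ i)⁻¹) x x ≤
        innerW (fun i => (μ i)⁻¹) (hatP P μ *ᵥ x) (hatP P μ *ᵥ x) := by
  set d : Fin N → ℝ := fun i => innerW (fun i => (μ i)⁻¹) μ (v i)
  obtain ⟨a, b, hab, hab_d⟩ : ∃ a b : ℝ, 0 < a ^ 2 + b ^ 2 ∧ a * d i₀ + b * d i₁ = 0 := by
    by_cases h : d i₀ = 0
    · exact ⟨1, 0, by norm_num, by simp [h]⟩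
    · exact ⟨d i₁, -d i₀, by nlinarith [sq_nonneg (d i₁), mul_self_pos.2 h], by ring⟩
  refine ⟨a • v i₀ + b • v i₁, ?_⟩
  have hx : innerW (fun i => (μ i)⁻¹) (a • v i₀ + b • v i₁) (a • v i₀ + b • v i₁) =
      a ^ 2 + b ^ 2 := by
    simp only [innerW_add_left, innerW_add_right, innerW_smul_left, innerW_smul_right, horth,
      hi, hi.symm, if_true, if_false]
    ring
  have hPx : innerW (fun i => (μ i)⁻¹) (P *ᵥ (a • v i₀ + b • v i₁))
      (P *ᵥ (a • v i₀ + b • v i₁)) = a ^ 2 * lam i₀ + b ^ 2 * lam i₁ := by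
    rw [← innerW_adjW_mul_self_mulVec hμ, mulVec_add, mulVec_smul, mulVec_smul, heig, heig]
    simp only [innerW_add_left, innerW_add_right, innerW_smul_left, innerW_smul_right, horth,
      hi, hi.symm, if_true, if_false]
    ring
  have hsum : ∑ k, (a • v i₀ + b • v i₁) k = 0 := by
    rw [← innerW_inv_right_self hμ, innerW_add_left, innerW_smul_left, innerW_smul_left,
      innerW_comm, innerW_comm _ (v i₁)]
    exact hab_d
  rw [innerW_hatP_mulVec_self hP hμ hμsum, hsum, hPx, hx]
  exact ⟨hab, by nlinarith [sq_nonneg a]⟩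

end Spectral

/-- `‖P̂‖_{1/μ} = √λ₂` with λ₂ the second largest eigenvalue of `P* P`, where
the eigenvalues are enumerated in decreasing order with an `ℓ²(1/μ)`-orthonormal basis of
eigenvectors. -/
theorem stmt3 {N : ℕ} (hN : 2 ≤ N) (P : Matrix (Fin N) (Fin N) ℝ)
    (μ : Fin N → ℝ) (hP : ColStoch P)
    (hμpos : ∀ i, 0 < μ i) (hμsum : ∑ i, μ i = 1) (hinv : P.mulVec μ = μ)
    (lam : Fin N → ℝ) (v : Fin N → Fin N → ℝ)
    (hanti : Antitone lam)
    (horth : ∀ i j, innerW (fun i => (μ i)⁻¹) (v i) (v j) = if i = j then 1 else 0)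
    (heig : ∀ i, (adjW μ P * P).mulVec (v i) = lam i • v i) :
    opNormW (fun i => (μ i)⁻¹) (hatP P μ) = Real.sqrt (lam ⟨1, by omega⟩) := by
  have hμ : ∀ i, μ i ≠ 0 := fun i => (hμpos i).ne'
  have hlam_nonneg : 0 ≤ lam ⟨1, by omega⟩ := by
    rw [← innerW_mulVec_eigenvector hμ horth heig]
    exact innerW_self_nonneg (fun i => inv_nonneg.2 (hμpos i).le) _
  have hlam_tail : ∀ i ≠ (⟨0, by omega⟩ : Fin N), lam i ≤ lam ⟨1, by omega⟩ := fun i hi =>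
    hanti (Fin.le_def.2 (Nat.one_le_iff_ne_zero.2 fun h => hi (Fin.ext h)))
  obtain ⟨x₀, hx₀, hge⟩ := exists_le_innerW_hatP_mulVec_self hP.2 hμ hμsum horth heig
    (i₀ := ⟨0, by omega⟩) (i₁ := ⟨1, by omega⟩) (by simp [Fin.ext_iff])
    (hanti (Fin.le_def.2 zero_le_one))
  exact opNormW_eq_sqrt hlam_nonneg
    (innerW_hatP_mulVec_self_le hP hμpos hμsum hinv horth heig hlam_nonneg hlam_tail) hx₀ hge
end

section
/- Let M ∈ ℝ^{k×k} be an irreducible column stochastic matrix with invariant probability vector z, and let v, w ∈ ℝ^k with 𝟙ᵀv ≠ 0 and zᵀw ≠ 0. Then the matrix I − M + v wᵀ is invertible, and z = (I − M + v wᵀ)^{−1} v wᵀ z. -/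
open Matrix BigOperators

/-!
By irreducibility, the fixed space of `M` is the line spanned by the positive vector `z`. Since
`𝟙ᵀ (I - M) = 0`, applying `𝟙ᵀ` to `(I - M + v wᵀ) x = 0` gives `(𝟙ᵀ v)(wᵀ x) = 0`, so `wᵀ x = 0`
and `x` is fixed by `M`, i.e. `x = c z`; then `c (zᵀ w) = 0` forces `x = 0`. The identity for `z`
holds because `(I - M) z = 0`.
-/

namespace Matrix

variable {n : Type*} [Fintype n] [DecidableEq n]

lemma pow_mulVec_eq_self {R : Type*} [CommSemiring R] {M : Matrix n n R} {x : n → R}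
    (hx : M *ᵥ x = x) (k : ℕ) : (M ^ k) *ᵥ x = x := by
  induction k with
  | zero => simp
  | succ k ih => rw [pow_succ, ← mulVec_mulVec, hx, ih]

section Irreducible

variable {M : Matrix n n ℝ} (hM : ∀ i j, 0 ≤ M i j) (hirr : Irred M)
include hM hirr

/-- Zero entries of a nonnegative fixed vector propagate along the paths of the graph of `M`. -/
lemma eq_zero_of_mulVec_eq_self_of_apply_eq_zero {y : n → ℝ} (hy : ∀ i, 0 ≤ y i)
    (hfix : M *ᵥ y = y) {i : n} (hi : y i = 0) : y = 0 := by
  funext j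
  obtain ⟨k, -, hk⟩ := hirr i j
  have hsum : ∑ l, (M ^ k) i l * y l = 0 := by
    rw [← hi, ← congrFun (pow_mulVec_eq_self hfix k) i]
    rfl
  have hterm := (Finset.sum_eq_zero_iff_of_nonneg fun l _ =>
    mul_nonneg (pow_apply_nonneg hM k i l) (hy l)).mp hsum j (Finset.mem_univ j)
  exact (mul_eq_zero.mp hterm).resolve_left hk

lemma pos_of_mulVec_eq_self {z : n → ℝ} (hz : ∀ i, 0 ≤ z i) (hz0 : z ≠ 0)
    (hfix : M *ᵥ z = z) (i : n) : 0 < z i :=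
  (hz i).lt_of_ne fun h =>
    hz0 (eq_zero_of_mulVec_eq_self_of_apply_eq_zero hM hirr hz hfix h.symm)

/-- Subtract from `x` the largest multiple of `z` that keeps it nonnegative; the remainder
vanishes at a point, hence everywhere. -/
lemma exists_eq_smul_of_mulVec_eq_self {z : n → ℝ} (hz : ∀ i, 0 < z i)
    (hzfix : M *ᵥ z = z) {x : n → ℝ} (hxfix : M *ᵥ x = x) : ∃ c : ℝ, x = c • z := by
  cases isEmpty_or_nonempty n
  · exact ⟨0, Subsingleton.elim _ _⟩
  obtain ⟨i₀, -, hmin⟩ :=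
    Finset.exists_min_image Finset.univ (fun i => x i / z i) Finset.univ_nonempty
  refine ⟨x i₀ / z i₀, sub_eq_zero.mp ?_⟩
  refine eq_zero_of_mulVec_eq_self_of_apply_eq_zero hM hirr (fun i => ?_) ?_ (i := i₀) ?_
  · have := (le_div_iff₀ (hz i)).mp (hmin i (Finset.mem_univ i))
    simp only [Pi.sub_apply, Pi.smul_apply, smul_eq_mul]
    linarith
  · rw [mulVec_sub, mulVec_smul, hxfix, hzfix]
  · simp [div_mul_cancel₀ _ (hz i₀).ne']

end Irreducible

lemma one_sub_add_vecMulVec_mulVec {K : Type*} [Field K] (M : Matrix n n K) (v w x : n → K) :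
    (1 - M + vecMulVec v w) *ᵥ x = x - M *ᵥ x + (w ⬝ᵥ x) • v := by
  simp [add_mulVec, sub_mulVec, vecMulVec_mulVec]

lemma isUnit_one_sub_add_vecMulVec {K : Type*} [Field K] {M : Matrix n n K}
    (hM : 1 ᵥ* M = 1) {z : n → K} (hfix : ∀ x, M *ᵥ x = x → ∃ c : K, x = c • z)
    {v w : n → K} (hv : 1 ⬝ᵥ v ≠ 0) (hw : z ⬝ᵥ w ≠ 0) :
    IsUnit (1 - M + vecMulVec v w) := by
  rw [isUnit_iff_isUnit_det, isUnit_iff_ne_zero, Ne, ← exists_mulVec_eq_zero_iff]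
  rintro ⟨x, hx0, hx⟩
  rw [one_sub_add_vecMulVec_mulVec] at hx
  have hwx : w ⬝ᵥ x = 0 := by
    have h := congrArg (1 ⬝ᵥ ·) hx
    simp only [dotProduct_add, dotProduct_sub, dotProduct_smul, dotProduct_mulVec, hM,
      sub_self, zero_add, dotProduct_zero, smul_eq_mul] at h
    exact (mul_eq_zero.mp h).resolve_right hv
  obtain ⟨c, rfl⟩ := hfix x (by
    rw [hwx, zero_smul, add_zero, sub_eq_zero] at hx
    exact hx.symm)
  rw [dotProduct_smul, smul_eq_mul, dotProduct_comm] at hwx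
  rw [(mul_eq_zero.mp hwx).resolve_right hw, zero_smul] at hx0
  exact hx0 rfl

end Matrix

/-- for irreducible column stochastic `M` with invariant probability vector `z`,
and `v, w` with `𝟙ᵀv ≠ 0`, `zᵀw ≠ 0`, the matrix `I - M + v wᵀ` is invertible and
`z = (I - M + v wᵀ)⁻¹ v wᵀ z`. -/
theorem stmt5 {k : ℕ} (M : Matrix (Fin k) (Fin k) ℝ)
    (hM : ColStoch M) (hirr : Irred M)
    (z : Fin k → ℝ) (hz : ∀ i, 0 ≤ z i) (hzsum : ∑ i, z i = 1) (hzinv : M.mulVec z = z)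
    (v w : Fin k → ℝ) (hv : ∑ i, v i ≠ 0) (hw : ∑ i, z i * w i ≠ 0) :
    IsUnit (1 - M + vecMulVec v w) ∧
      z = (1 - M + vecMulVec v w)⁻¹.mulVec ((vecMulVec v w).mulVec z) := by
  have hMcol : 1 ᵥ* M = 1 := (mem_colStochastic_iff_sum.mpr hM).2
  have hz0 : z ≠ 0 := by
    rintro rfl
    simp at hzsum
  have hzpos := pos_of_mulVec_eq_self hM.1 hirr hz hz0 hzinv
  have hunit : IsUnit (1 - M + vecMulVec v w) :=
    isUnit_one_sub_add_vecMulVec hMcol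
      (fun x hx => exists_eq_smul_of_mulVec_eq_self hM.1 hirr hzpos hzinv hx)
      (by rwa [one_dotProduct]) hw
  refine ⟨hunit, ?_⟩
  have hBz : (1 - M + vecMulVec v w) *ᵥ z = vecMulVec v w *ᵥ z := by
    rw [add_mulVec, sub_mulVec, one_mulVec, hzinv, sub_self, zero_add]
  rw [← hBz, mulVec_mulVec, nonsing_inv_mul _ ((isUnit_iff_isUnit_det _).mp hunit),
    one_mulVec]
end

section
/- If P is irreducible and ν ∈ ℝ^N is a strictly positive probability vector, then the coarse matrix C(ν) = A P D(ν) is irreducible. Consequently, if the initial approximation μ⁰ > 0, all IAD iterates μ^k are well-defined and strictly positive. -/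
open Matrix BigOperators

/-!
A path `x → y` in the graph of positive entries of `P` projects to a path `f x → f y` in the
graph of `C(ν) = A P D(ν)`, because `A` and `D(ν)` are positive on the block pattern of the
partition; as `f` is onto, `C(ν)` is irreducible. For the iteration, a nonzero nonnegative
fixed vector of an irreducible nonnegative matrix is strictly positive, so `z(C(μᵏ)) > 0`,
hence `D(μᵏ) z(C(μᵏ)) > 0`, and `P` maps positive vectors to positive vectors since none of
its rows vanishes.
-/

section Nonneg

variable {ι κ o : Type*} [Fintype κ]

lemma Matrix.mul_apply_nonneg {A : Matrix ι κ ℝ} {B : Matrix κ o ℝ}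
    (hA : ∀ i j, 0 ≤ A i j) (hB : ∀ i j, 0 ≤ B i j) (i : ι) (k : o) : 0 ≤ (A * B) i k :=
  Finset.sum_nonneg fun j _ => mul_nonneg (hA i j) (hB j k)

lemma Matrix.mul_apply_pos {A : Matrix ι κ ℝ} {B : Matrix κ o ℝ}
    (hA : ∀ i j, 0 ≤ A i j) (hB : ∀ i j, 0 ≤ B i j) {i : ι} {j : κ} {k : o}
    (hij : 0 < A i j) (hjk : 0 < B j k) : 0 < (A * B) i k :=
  Finset.sum_pos' (fun l _ => mul_nonneg (hA i l) (hB l k))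
    ⟨j, Finset.mem_univ j, mul_pos hij hjk⟩

lemma Matrix.mulVec_apply_nonneg {A : Matrix ι κ ℝ} {v : κ → ℝ}
    (hA : ∀ i j, 0 ≤ A i j) (hv : ∀ j, 0 ≤ v j) (i : ι) : 0 ≤ (A *ᵥ v) i :=
  Finset.sum_nonneg fun j _ => mul_nonneg (hA i j) (hv j)

lemma Matrix.mulVec_apply_pos {A : Matrix ι κ ℝ} {v : κ → ℝ}
    (hA : ∀ i j, 0 ≤ A i j) (hv : ∀ j, 0 ≤ v j) {i : ι} {j : κ}
    (hij : 0 < A i j) (hj : 0 < v j) : 0 < (A *ᵥ v) i :=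
  Finset.sum_pos' (fun l _ => mul_nonneg (hA i l) (hv l))
    ⟨j, Finset.mem_univ j, mul_pos hij hj⟩

end Nonneg

section Irred

variable {ι κ : Type*} [Fintype ι] [DecidableEq ι] [Fintype κ] [DecidableEq κ]

lemma Matrix.pow_apply_pos_of_map {M : Matrix ι ι ℝ} {C : Matrix κ κ ℝ}
    (hM : ∀ i j, 0 ≤ M i j) (hC : ∀ i j, 0 ≤ C i j) {f : ι → κ}
    (hMC : ∀ x y, 0 < M x y → 0 < C (f x) (f y)) (k : ℕ) (x y : ι)
    (hxy : 0 < (M ^ k) x y) : 0 < (C ^ k) (f x) (f y) := by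
  induction k generalizing y with
  | zero =>
    obtain rfl : x = y := by by_contra h; simp [one_apply_ne h] at hxy
    simp
  | succ k ih =>
    rw [pow_succ, mul_apply] at hxy
    obtain ⟨l, -, hl⟩ := Finset.exists_ne_zero_of_sum_ne_zero hxy.ne'
    have hMk : 0 < (M ^ k) x l :=
      (pow_apply_nonneg hM k x l).lt_of_ne' fun h => by simp [h] at hl
    have hMly : 0 < M l y := (hM l y).lt_of_ne' fun h => by simp [h] at hl
    rw [pow_succ]
    exact mul_apply_pos (pow_apply_nonneg hC k) hC (ih l hMk) (hMC l y hMly)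

lemma Irred.of_surjective {M : Matrix ι ι ℝ} {C : Matrix κ κ ℝ}
    (hM : ∀ i j, 0 ≤ M i j) (hC : ∀ i j, 0 ≤ C i j) {f : ι → κ}
    (hf : Function.Surjective f) (hMC : ∀ x y, 0 < M x y → 0 < C (f x) (f y))
    (hirr : Irred M) : Irred C := by
  intro i j
  obtain ⟨x, rfl⟩ := hf i
  obtain ⟨y, rfl⟩ := hf j
  obtain ⟨k, hk, hxy⟩ := hirr x y
  exact ⟨k, hk, (pow_apply_pos_of_map hM hC hMC k x y
    ((pow_apply_nonneg hM k x y).lt_of_ne' hxy)).ne'⟩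

lemma Irred.exists_apply_ne_zero {M : Matrix ι ι ℝ} (hirr : Irred M) (i : ι) :
    ∃ j, M i j ≠ 0 := by
  by_contra! hrow
  obtain ⟨k, hk, hii⟩ := hirr i i
  obtain ⟨k, rfl⟩ := Nat.exists_eq_add_of_lt hk
  rw [zero_add, pow_succ', mul_apply] at hii
  simp [hrow] at hii

lemma Irred.mulVec_pos {M : Matrix ι ι ℝ} (hM : ∀ i j, 0 ≤ M i j) (hirr : Irred M)
    {v : ι → ℝ} (hv : ∀ i, 0 < v i) (i : ι) : 0 < (M *ᵥ v) i := by
  obtain ⟨j, hj⟩ := hirr.exists_apply_ne_zero i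
  exact mulVec_apply_pos hM (fun j => (hv j).le) ((hM i j).lt_of_ne' hj) (hv j)

lemma Matrix.pow_mulVec_eq_self_s6 {M : Matrix ι ι ℝ} {z : ι → ℝ} (hz : M *ᵥ z = z)
    (k : ℕ) : (M ^ k) *ᵥ z = z := by
  induction k with
  | zero => simp
  | succ k ih => rw [pow_succ', ← mulVec_mulVec, ih, hz]

lemma Irred.pos_of_mulVec_eq_self {M : Matrix ι ι ℝ} (hM : ∀ i j, 0 ≤ M i j)
    (hirr : Irred M) {z : ι → ℝ} (hz : ∀ i, 0 ≤ z i) (hz0 : z ≠ 0) (hfix : M *ᵥ z = z)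
    (j : ι) : 0 < z j := by
  obtain ⟨i, hi⟩ := Function.ne_iff.mp hz0
  obtain ⟨k, -, hji⟩ := hirr j i
  rw [← pow_mulVec_eq_self_s6 hfix k]
  exact mulVec_apply_pos (pow_apply_nonneg hM k) hz
    ((pow_apply_nonneg hM k j i).lt_of_ne' hji) ((hz i).lt_of_ne' hi)

end Irred

section Aggregation

variable {N n : ℕ} (f : Fin N → Fin n) {ν : Fin N → ℝ}

lemma agg_nonneg (i : Fin n) (x : Fin N) : 0 ≤ Agg f i x := by
  unfold Agg; split_ifs <;> norm_num

lemma agg_mulVec_pos (hν : ∀ x, 0 < ν x) (x : Fin N) : 0 < (Agg f *ᵥ ν) (f x) :=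
  mulVec_apply_pos (agg_nonneg f) (fun y => (hν y).le) (by simp [Agg]) (hν x)

lemma disagg_nonneg (hν : ∀ x, 0 ≤ ν x) (x : Fin N) (i : Fin n) : 0 ≤ Disagg f ν x i := by
  unfold Disagg
  split_ifs
  · exact div_nonneg (hν x) (mulVec_apply_nonneg (agg_nonneg f) hν i)
  · rfl

lemma disagg_apply_pos (hν : ∀ x, 0 < ν x) (x : Fin N) : 0 < Disagg f ν x (f x) := by
  simpa [Disagg] using div_pos (hν x) (agg_mulVec_pos f hν x)

lemma disagg_mulVec_pos (hν : ∀ x, 0 < ν x) {z : Fin n → ℝ} (hz : ∀ i, 0 < z i)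
    (x : Fin N) : 0 < (Disagg f ν *ᵥ z) x :=
  mulVec_apply_pos (disagg_nonneg f fun y => (hν y).le) (fun i => (hz i).le)
    (disagg_apply_pos f hν x) (hz (f x))

variable {P : Matrix (Fin N) (Fin N) ℝ}

lemma coarseC_nonneg (hP : ∀ x y, 0 ≤ P x y) (hν : ∀ x, 0 ≤ ν x) (i j : Fin n) :
    0 ≤ CoarseC P f ν i j :=
  mul_apply_nonneg (mul_apply_nonneg (agg_nonneg f) hP) (disagg_nonneg f hν) i j

lemma coarseC_apply_pos (hP : ∀ x y, 0 ≤ P x y) (hν : ∀ x, 0 < ν x) {x y : Fin N}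
    (hxy : 0 < P x y) : 0 < CoarseC P f ν (f x) (f y) :=
  mul_apply_pos (mul_apply_nonneg (agg_nonneg f) hP) (disagg_nonneg f fun z => (hν z).le)
    (mul_apply_pos (agg_nonneg f) hP (by simp [Agg]) hxy) (disagg_apply_pos f hν y)

lemma coarseC_irred (hP : ∀ x y, 0 ≤ P x y) (hirr : Irred P) (hf : Function.Surjective f)
    (hν : ∀ x, 0 < ν x) : Irred (CoarseC P f ν) :=
  hirr.of_surjective hP (coarseC_nonneg f hP fun x => (hν x).le) hf
    fun _ _ => coarseC_apply_pos f hP hν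

end Aggregation

theorem stmt6_general {N n : ℕ} (P : Matrix (Fin N) (Fin N) ℝ)
    (hP : ColStoch P) (hirr : Irred P)
    (f : Fin N → Fin n) (hf : Function.Surjective f) :
    (∀ ν : Fin N → ℝ, (∀ i, 0 < ν i) → (∑ i, ν i = 1) → Irred (CoarseC P f ν)) ∧
      (∀ (μs : ℕ → Fin N → ℝ) (zs : ℕ → Fin n → ℝ),
        (∀ i, 0 < μs 0 i) → (∑ i, μs 0 i = 1) →
        (∀ k, (∀ i, 0 ≤ zs k i) ∧ (∑ i, zs k i = 1) ∧
          (CoarseC P f (μs k)).mulVec (zs k) = zs k) →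
        (∀ k, μs (k + 1) = P.mulVec ((Disagg f (μs k)).mulVec (zs k))) →
        ∀ k, (∀ i, 0 < μs k i) ∧ Irred (CoarseC P f (μs k))) := by
  have hPnn := hP.1
  refine ⟨fun ν hν _ => coarseC_irred f hPnn hirr hf hν, fun μs zs hμ₀ _ hz hstep => ?_⟩
  have hpos : ∀ k i, 0 < μs k i := by
    intro k
    induction k with
    | zero => exact hμ₀
    | succ k ih =>
      obtain ⟨hz_nonneg, hz_sum, hz_fix⟩ := hz k
      have hz_ne : zs k ≠ 0 := by rintro h; simp [h] at hz_sum
      have hz_pos := (coarseC_irred f hPnn hirr hf ih).pos_of_mulVec_eq_self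
        (coarseC_nonneg f hPnn fun x => (ih x).le) hz_nonneg hz_ne hz_fix
      rw [hstep k]
      exact hirr.mulVec_pos hPnn (disagg_mulVec_pos f ih hz_pos)
  exact fun k => ⟨hpos k, coarseC_irred f hPnn hirr hf (hpos k)⟩

/-- if `P` is irreducible and `ν > 0` is a probability vector then
`C(ν) = A P D(ν)` is irreducible; consequently all IAD iterates starting from a positive
probability vector are well-defined and strictly positive. -/
theorem stmt6 {N n : ℕ} (P : Matrix (Fin N) (Fin N) ℝ)
    (μ : Fin N → ℝ) (hP : ColStoch P) (hirr : Irred P)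
    (hμpos : ∀ i, 0 < μ i) (hμsum : ∑ i, μ i = 1) (hinv : P.mulVec μ = μ)
    (f : Fin N → Fin n) (hf : Function.Surjective f) :
    (∀ ν : Fin N → ℝ, (∀ i, 0 < ν i) → (∑ i, ν i = 1) → Irred (CoarseC P f ν)) ∧
      (∀ (μs : ℕ → Fin N → ℝ) (zs : ℕ → Fin n → ℝ),
        (∀ i, 0 < μs 0 i) → (∑ i, μs 0 i = 1) →
        (∀ k, (∀ i, 0 ≤ zs k i) ∧ (∑ i, zs k i = 1) ∧
          (CoarseC P f (μs k)).mulVec (zs k) = zs k) →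
        (∀ k, μs (k + 1) = P.mulVec ((Disagg f (μs k)).mulVec (zs k))) →
        ∀ k, (∀ i, 0 < μs k i) ∧ Irred (CoarseC P f (μs k))) :=
  stmt6_general P hP hirr f hf
end

section
/- Let J(μ) = P̂ (I − S(μ)) and Π(μ) = D(μ)A. Then J(μ) Π(μ) = 0 and Π(μ) J(μ) = Π(μ) − S(μ). In particular J(μ) = J(μ)(I − Π(μ)) and σ(J(μ)) = σ((I − Π(μ)) J(μ)). -/
open Matrix BigOperators

/-! `S = D (A T D)⁻¹ A T` with `A D = 1` and `T = I - P̂` is a Petrov–Galerkin projection: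
it fixes `rg D = rg Π` and `A T (I - S) = 0`. These two facts give `J Π = 0` and
`Π J = Π - S`; then `J = J (I - Π)`, and `J (I - Π)`, `(I - Π) J` have the same
characteristic polynomial.

The analytic input is that `A (I - P̂) D` is invertible. A kernel vector `x` has `𝟙ᵀx = 0`
and `z = D x` satisfies `A P z = A z`. The ratio `z / μ` is constant on blocks, and where it
equals its maximum `M`, `P z ≤ M μ` forces equality along every edge of `P`; by irreducibility
the ratio is constant, so `x` is a multiple of `A μ`, hence zero. -/

open Matrix Finset

section GalerkinProjection

variable {m k R : Type*} [Fintype m] [Fintype k] [DecidableEq k] [CommRing R]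

noncomputable def galerkinProj (A : Matrix k m R) (T : Matrix m m R) (D : Matrix m k R) :
    Matrix m m R :=
  D * (A * T * D)⁻¹ * (A * T)

variable {A : Matrix k m R} {T : Matrix m m R} {D : Matrix m k R}

lemma galerkinProj_mul_self (hB : IsUnit (A * T * D).det) : galerkinProj A T D * D = D := by
  rw [galerkinProj, Matrix.mul_assoc, Matrix.mul_assoc, Matrix.nonsing_inv_mul _ hB,
    Matrix.mul_one]

lemma mul_galerkinProj_eq (hB : IsUnit (A * T * D).det) :
    A * T * galerkinProj A T D = A * T := by
  calc A * T * galerkinProj A T D = A * T * D * (A * T * D)⁻¹ * (A * T) := by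
        simp only [galerkinProj, Matrix.mul_assoc]
    _ = A * T := by rw [Matrix.mul_nonsing_inv _ hB, Matrix.one_mul]

lemma mul_galerkinProj (hAD : A * D = 1) : D * A * galerkinProj A T D = galerkinProj A T D := by
  calc D * A * galerkinProj A T D = D * (A * D) * (A * T * D)⁻¹ * (A * T) := by
        simp only [galerkinProj, Matrix.mul_assoc]
    _ = galerkinProj A T D := by rw [hAD, Matrix.mul_one, galerkinProj]

lemma one_sub_mul_one_sub_galerkinProj_mul [DecidableEq m] (hB : IsUnit (A * T * D).det) :
    (1 - T) * (1 - galerkinProj A T D) * (D * A) = 0 := by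
  have h : (1 - galerkinProj A T D) * D = 0 := by
    rw [Matrix.sub_mul, Matrix.one_mul, galerkinProj_mul_self hB, sub_self]
  rw [Matrix.mul_assoc, ← Matrix.mul_assoc _ D, h, Matrix.zero_mul, Matrix.mul_zero]

lemma mul_one_sub_mul_one_sub_galerkinProj [DecidableEq m] (hAD : A * D = 1)
    (hB : IsUnit (A * T * D).det) :
    D * A * ((1 - T) * (1 - galerkinProj A T D)) = D * A - galerkinProj A T D := by
  calc D * A * ((1 - T) * (1 - galerkinProj A T D))
      = D * A - D * A * galerkinProj A T D - D * (A * T - A * T * galerkinProj A T D) := by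
        simp only [Matrix.mul_sub, Matrix.sub_mul, Matrix.mul_one, Matrix.one_mul,
          Matrix.mul_assoc]
        abel
    _ = D * A - galerkinProj A T D := by
        rw [mul_galerkinProj hAD, mul_galerkinProj_eq hB, sub_self, Matrix.mul_zero, sub_zero]

end GalerkinProjection

lemma Matrix.spectrum_mul_comm {m R : Type*} [Fintype m] [DecidableEq m] [CommRing R]
    (A B : Matrix m m R) : spectrum R (A * B) = spectrum R (B * A) := by
  ext r
  simp only [Matrix.mem_spectrum_iff_not_isUnit_eval_charpoly, Matrix.charpoly_mul_comm]

lemma specC_mul_comm {N : ℕ} (A B : Matrix (Fin N) (Fin N) ℝ) :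
    specC (A * B) = specC (B * A) := by
  simp only [specC]
  rw [show (A * B).map Complex.ofReal = (A * B).map Complex.ofRealHom from rfl,
    show (B * A).map Complex.ofReal = (B * A).map Complex.ofRealHom from rfl, Matrix.map_mul,
    Matrix.map_mul, Matrix.spectrum_mul_comm]

section MaximumPrinciple

variable {ι : Type*} [Fintype ι]

lemma Irred.forall_of_closed [DecidableEq ι] {M : Matrix ι ι ℝ} (hM : Irred M) {S : ι → Prop}
    (hS : ∀ a c, S a → M a c ≠ 0 → S c) {a : ι} (ha : S a) (b : ι) : S b := by
  obtain ⟨k, -, hk⟩ := hM a b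
  induction k generalizing b with
  | zero =>
    rw [pow_zero] at hk
    obtain rfl : a = b := by_contra fun h => hk (one_apply_ne h)
    exact ha
  | succ k ih =>
    rw [pow_succ, mul_apply] at hk
    obtain ⟨c, -, hc⟩ := Finset.exists_ne_zero_of_sum_ne_zero hk
    exact hS c b (ih c (left_ne_zero_of_mul hc)) (right_ne_zero_of_mul hc)

lemma mulVec_mono_of_nonneg {M : Matrix ι ι ℝ} (hM : ∀ i j, 0 ≤ M i j) {z w : ι → ℝ}
    (h : z ≤ w) : M *ᵥ z ≤ M *ᵥ w :=
  fun i => Finset.sum_le_sum fun j _ => mul_le_mul_of_nonneg_left (h j) (hM i j)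

lemma eq_of_mulVec_apply_eq_of_le {M : Matrix ι ι ℝ} {a c : ι} (hM : ∀ j, 0 ≤ M a j)
    {z w : ι → ℝ} (hzw : z ≤ w) (heq : (M *ᵥ z) a = (M *ᵥ w) a) (hac : M a c ≠ 0) :
    z c = w c :=
  mul_left_cancel₀ hac <| (Finset.sum_eq_sum_iff_of_le fun j _ =>
    mul_le_mul_of_nonneg_left (hzw j) (hM j)).mp heq c (mem_univ c)

end MaximumPrinciple

section Aggregation

variable {N n : ℕ} (f : Fin N → Fin n)

lemma agg_mulVec_apply (v : Fin N → ℝ) (i : Fin n) :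
    (Agg f *ᵥ v) i = ∑ j, if f j = i then v j else 0 := by
  simp [mulVec, dotProduct, Agg, ite_mul]

lemma sum_agg_mulVec (v : Fin N → ℝ) : ∑ i, (Agg f *ᵥ v) i = ∑ j, v j := by
  simp only [agg_mulVec_apply]
  rw [Finset.sum_comm]
  simp

lemma agg_mulVec_apply_congr {u v : Fin N → ℝ} {i : Fin n} (h : ∀ b, f b = i → u b = v b) :
    (Agg f *ᵥ u) i = (Agg f *ᵥ v) i := by
  simp only [agg_mulVec_apply]
  exact Finset.sum_congr rfl fun b _ => by split_ifs with hb <;> simp [h b, hb]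

lemma eq_of_agg_mulVec_apply_eq_of_le {u v : Fin N → ℝ} (huv : u ≤ v) {a : Fin N}
    (h : (Agg f *ᵥ u) (f a) = (Agg f *ᵥ v) (f a)) : u a = v a := by
  simp only [agg_mulVec_apply] at h
  have := (Finset.sum_eq_sum_iff_of_le fun b _ => ?_).mp h a (mem_univ a)
  · simpa using this
  · split_ifs
    exacts [huv b, le_rfl]

variable {f}

lemma agg_mulVec_pos_s11 (hf : Function.Surjective f) {μ : Fin N → ℝ} (hμ : ∀ j, 0 < μ j)
    (i : Fin n) : 0 < (Agg f *ᵥ μ) i := by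
  obtain ⟨j, rfl⟩ := hf i
  rw [agg_mulVec_apply]
  exact Finset.sum_pos' (fun k _ => by split_ifs; exacts [(hμ k).le, le_rfl])
    ⟨j, mem_univ j, by simp [hμ j]⟩

lemma disagg_mulVec_apply (μ : Fin N → ℝ) (x : Fin n → ℝ) (b : Fin N) :
    (Disagg f μ *ᵥ x) b = μ b * (x (f b) / (Agg f *ᵥ μ) (f b)) := by
  simp only [mulVec, dotProduct, Disagg, ite_mul, zero_mul, sum_ite_eq, mem_univ, ↓reduceIte]
  ring

lemma agg_mulVec_disagg_mulVec (hf : Function.Surjective f) {μ : Fin N → ℝ}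
    (hμ : ∀ j, 0 < μ j) (x : Fin n → ℝ) : Agg f *ᵥ (Disagg f μ *ᵥ x) = x := by
  funext i
  calc (Agg f *ᵥ (Disagg f μ *ᵥ x)) i
      = (Agg f *ᵥ μ) i * (x i / (Agg f *ᵥ μ) i) := by
        rw [agg_mulVec_apply]
        nth_rw 1 [agg_mulVec_apply]
        rw [Finset.sum_mul]
        refine Finset.sum_congr rfl fun b _ => ?_
        split_ifs with hb
        · rw [disagg_mulVec_apply, hb]
        · rw [zero_mul]
    _ = x i := mul_div_cancel₀ _ (agg_mulVec_pos_s11 hf hμ i).ne'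

lemma agg_mul_disagg (hf : Function.Surjective f) {μ : Fin N → ℝ} (hμ : ∀ j, 0 < μ j) :
    Agg f * Disagg f μ = 1 :=
  ext_iff_mulVec.mpr fun x => by
    rw [← mulVec_mulVec, agg_mulVec_disagg_mulVec hf hμ, one_mulVec]

end Aggregation

lemma ColStoch.sum_mulVec {ι : Type*} [Fintype ι] {P : Matrix ι ι ℝ} (hP : ColStoch P)
    (v : ι → ℝ) : ∑ i, (P *ᵥ v) i = ∑ j, v j := by
  simp only [mulVec, dotProduct]
  rw [Finset.sum_comm]
  exact Finset.sum_congr rfl fun j _ => by rw [← Finset.sum_mul, hP.2 j, one_mul]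

section CoarseCorrection

variable {N n : ℕ} {P : Matrix (Fin N) (Fin N) ℝ} {μ : Fin N → ℝ} {f : Fin N → Fin n}

lemma eq_of_agg_mulVec_mulVec_eq (hP : ∀ i j, 0 ≤ P i j) (hirr : Irred P)
    (hμ : ∀ i, 0 < μ i) (hinv : P *ᵥ μ = μ) {g : Fin n → ℝ}
    (hg : Agg f *ᵥ (P *ᵥ fun b => μ b * g (f b)) = Agg f *ᵥ fun b => μ b * g (f b))
    (a b : Fin N) : g (f a) = g (f b) := by
  set z : Fin N → ℝ := fun b => μ b * g (f b)
  obtain ⟨a₀, -, hmax⟩ := Finset.exists_max_image univ (g ∘ f) ⟨a, mem_univ a⟩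
  set M := g (f a₀)
  have hz : z ≤ M • μ := fun b => by
    simpa [z, mul_comm] using mul_le_mul_of_nonneg_left (hmax b (mem_univ b)) (hμ b).le
  have hPz : P *ᵥ z ≤ M • μ := by
    simpa [mulVec_smul, hinv] using mulVec_mono_of_nonneg hP hz
  have hclosed : ∀ c d, g (f c) = M → P c d ≠ 0 → g (f d) = M := by
    intro c d hc hcd
    have hblock : (Agg f *ᵥ (P *ᵥ z)) (f c) = (Agg f *ᵥ (M • μ)) (f c) := by
      rw [hg]
      exact agg_mulVec_apply_congr f fun e he => by simp [z, he, hc, mul_comm]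
    have hPc : (P *ᵥ z) c = (P *ᵥ (M • μ)) c := by
      rw [mulVec_smul, hinv]
      exact eq_of_agg_mulVec_apply_eq_of_le f hPz hblock
    have hd : μ d * g (f d) = M * μ d := by
      simpa [z] using eq_of_mulVec_apply_eq_of_le (hP c) hz hPc hcd
    exact mul_left_cancel₀ (hμ d).ne' (hd.trans (mul_comm _ _))
  rw [hirr.forall_of_closed hclosed rfl a, hirr.forall_of_closed hclosed rfl b]

lemma eq_zero_of_coarse_mulVec_eq_zero (hP : ColStoch P) (hirr : Irred P) (hμ : ∀ i, 0 < μ i)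
    (hinv : P *ᵥ μ = μ) (hf : Function.Surjective f) {x : Fin n → ℝ}
    (hx : (Agg f * (1 - P + vecMulVec μ 1) * Disagg f μ) *ᵥ x = 0) : x = 0 := by
  rcases isEmpty_or_nonempty (Fin n) with _ | ⟨⟨i₀⟩⟩
  · exact Subsingleton.elim _ _
  obtain ⟨b₀, hb₀⟩ := hf i₀
  set ν := Agg f *ᵥ μ
  set z := Disagg f μ *ᵥ x
  have hAz : Agg f *ᵥ z = x := agg_mulVec_disagg_mulVec hf hμ x
  have hxsum : ∑ i, x i = ∑ b, z b := by rw [← hAz, sum_agg_mulVec]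
  have hνsum : ∑ i, ν i = ∑ b, μ b := sum_agg_mulVec f μ
  have hμsum : 0 < ∑ b, μ b := Finset.sum_pos (fun b _ => hμ b) ⟨b₀, mem_univ b₀⟩
  have hBx : x - Agg f *ᵥ (P *ᵥ z) + (∑ b, z b) • ν = 0 := by
    rw [← hx, ← mulVec_mulVec, ← mulVec_mulVec, add_mulVec, sub_mulVec, one_mulVec,
      vecMulVec_mulVec, op_smul_eq_smul, one_dotProduct, mulVec_add, mulVec_sub, hAz,
      mulVec_smul]
  -- `𝟙ᵀ` annihilates `A(I - P)`, so summing the equation leaves `(𝟙ᵀz)(𝟙ᵀμ) = 0`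
  have hs : ∑ b, z b = 0 := by
    have := congrArg (fun v => ∑ i, v i) hBx
    simp only [Pi.add_apply, Pi.sub_apply, Pi.smul_apply, smul_eq_mul, Pi.zero_apply,
      Finset.sum_add_distrib, Finset.sum_sub_distrib, ← Finset.mul_sum, Finset.sum_const_zero,
      sum_agg_mulVec, hP.sum_mulVec, hxsum, hνsum, sub_self, zero_add] at this
    exact (mul_eq_zero.mp this).resolve_right hμsum.ne'
  have harm : Agg f *ᵥ (P *ᵥ fun b => μ b * (x (f b) / ν (f b))) =
      Agg f *ᵥ fun b => μ b * (x (f b) / ν (f b)) := by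
    have hz : z = fun b => μ b * (x (f b) / ν (f b)) := funext (disagg_mulVec_apply μ x)
    rw [← hz, hAz]
    simpa [hs, sub_eq_zero, eq_comm] using hBx
  set c := x i₀ / ν i₀
  have hxν : x = c • ν := funext fun i => by
    obtain ⟨b, rfl⟩ := hf i
    have hratio :=
      eq_of_agg_mulVec_mulVec_eq (g := fun i => x i / ν i) hP.1 hirr hμ hinv harm b b₀
    rw [hb₀, div_eq_iff (agg_mulVec_pos_s11 hf hμ _).ne'] at hratio
    exact hratio
  have hc : c = 0 := by
    have := congrArg (fun v => ∑ i, v i) hxν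
    simp only [Pi.smul_apply, smul_eq_mul, ← Finset.mul_sum, hxsum, hs, hνsum] at this
    exact (mul_eq_zero.mp this.symm).resolve_right hμsum.ne'
  rw [hxν, hc, zero_smul]

end CoarseCorrection

lemma isUnit_det_coarse {N n : ℕ} {P : Matrix (Fin N) (Fin N) ℝ} {μ : Fin N → ℝ}
    {f : Fin N → Fin n} (hP : ColStoch P) (hirr : Irred P) (hμ : ∀ i, 0 < μ i)
    (hinv : P *ᵥ μ = μ) (hf : Function.Surjective f) :
    IsUnit (Agg f * (1 - P + vecMulVec μ 1) * Disagg f μ).det := by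
  refine isUnit_iff_ne_zero.mpr fun hdet => ?_
  obtain ⟨x, hx0, hx⟩ := exists_mulVec_eq_zero_iff.mpr hdet
  exact hx0 (eq_zero_of_coarse_mulVec_eq_zero hP hirr hμ hinv hf hx)

theorem stmt11_general {N n : ℕ} (P : Matrix (Fin N) (Fin N) ℝ)
    (μ : Fin N → ℝ) (hP : ColStoch P) (hirr : Irred P)
    (hμpos : ∀ i, 0 < μ i) (hinv : P.mulVec μ = μ)
    (f : Fin N → Fin n) (hf : Function.Surjective f) :
    Jop P f μ μ * PiProj f μ = 0 ∧
      PiProj f μ * Jop P f μ μ = PiProj f μ - CoarseS P f μ μ ∧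
      Jop P f μ μ = Jop P f μ μ * (1 - PiProj f μ) ∧
      specC (Jop P f μ μ) = specC ((1 - PiProj f μ) * Jop P f μ μ) := by
  set T := 1 - P + vecMulVec μ 1
  have hB : IsUnit (Agg f * T * Disagg f μ).det := isUnit_det_coarse hP hirr hμpos hinv hf
  have hJ : Jop P f μ μ = (1 - T) * (1 - galerkinProj (Agg f) T (Disagg f μ)) := by
    have hhat : hatP P μ = 1 - T := by simp only [hatP, T]; abel
    rw [Jop, hhat]
    rfl
  have hJPi : Jop P f μ μ * PiProj f μ = 0 := by
    rw [hJ]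
    exact one_sub_mul_one_sub_galerkinProj_mul hB
  have hJ_eq : Jop P f μ μ = Jop P f μ μ * (1 - PiProj f μ) := by
    rw [Matrix.mul_sub, Matrix.mul_one, hJPi, sub_zero]
  refine ⟨hJPi, ?_, hJ_eq, (congrArg specC hJ_eq).trans (specC_mul_comm _ _)⟩
  rw [hJ]
  exact mul_one_sub_mul_one_sub_galerkinProj (agg_mul_disagg hf hμpos) hB

/-- `J(μ)Π(μ) = 0`, `Π(μ)J(μ) = Π(μ) - S(μ)`; hence `J(μ) = J(μ)(I - Π(μ))`
and `σ(J(μ)) = σ((I - Π(μ))J(μ))`. -/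
theorem stmt11 {N n : ℕ} (P : Matrix (Fin N) (Fin N) ℝ)
    (μ : Fin N → ℝ) (hP : ColStoch P) (hirr : Irred P)
    (hμpos : ∀ i, 0 < μ i) (hμsum : ∑ i, μ i = 1) (hinv : P.mulVec μ = μ)
    (f : Fin N → Fin n) (hf : Function.Surjective f) :
    Jop P f μ μ * PiProj f μ = 0 ∧
      PiProj f μ * Jop P f μ μ = PiProj f μ - CoarseS P f μ μ ∧
      Jop P f μ μ = Jop P f μ μ * (1 - PiProj f μ) ∧
      specC (Jop P f μ μ) = specC ((1 - PiProj f μ) * Jop P f μ μ) :=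
  stmt11_general P μ hP hirr hμpos hinv f hf
end
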